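/- Let M be a countable monoid acting in a Borel way on a Polish space X so that the induced relation x ≼ y ⟺ (∃m∈M) x = m·y is a quasi-order, and let {U_i}_{i∈ℕ} be a sequence of Borel subsets of X separating points. Then the map φ sending x to φ_x ∈ (2^ℕ)^M defined by φ_x(s)(i) = 1 ⟺ s·x ∈ U_i is an injective Borel map satisfying t·φ_x = φ_{t·x} for all t ∈ M, and hence is a Borel reduction of ≼ to the canonical shift quasi-order on (2^ℕ)^M. -/

import Mathlib

/-!
The coordinate of `φ x` at `1` is the code `i ↦ [x ∈ U i]` of `x`, which is injective because
the `U i` separate points; equivariance `t • φ x = φ (t • x)` is the compatibility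
`s • (t • x) = (s * t) • x`. An injective equivariant map reflects and preserves the relation
`x = m • y`, so it is a reduction.
-/

section

open Classical

variable {X M ι : Type*}

theorem measurable_decide_mem_act [MeasurableSpace X] (act : M → X → X)
    (hmeas : ∀ m, Measurable (act m)) (U : ι → Set X) (hU : ∀ i, MeasurableSet (U i)) :
    Measurable fun x (s : M) (i : ι) => decide (act s x ∈ U i) :=
  measurable_pi_lambda _ fun s => measurable_pi_lambda _ fun i =>
    measurable_to_bool <| by simpa [Set.preimage] using hmeas s (hU i)

theorem injective_decide_mem_of_separates (U : ι → Set X)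
    (hsep : ∀ x y : X, x ≠ y → ∃ i, (x ∈ U i ↔ y ∉ U i)) :
    Function.Injective fun x i => decide (x ∈ U i) := by
  intro x y hxy
  by_contra hne
  obtain ⟨i, hi⟩ := hsep x y hne
  have := congrFun hxy i
  simp only [decide_eq_decide] at this
  tauto

theorem exists_eq_act_iff_of_injective_of_equivariant {Y : Type*} (a : M → X → X)
    (b : M → Y → Y) {f : X → Y} (hf : Function.Injective f)
    (hequiv : ∀ m x, b m (f x) = f (a m x)) (x y : X) :
    (∃ m, x = a m y) ↔ ∃ m, f x = b m (f y) := by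
  simp only [hequiv, hf.eq_iff]

end

open Classical in
theorem reduction_to_shift_quasiOrder
    (X : Type)
    [MeasurableSpace X]
    (M : Type) [Monoid M]
    (act : M → X → X)
    (hmeas : ∀ m : M, Measurable (act m))
    (hone : ∀ x : X, act 1 x = x)
    (hmul : ∀ (m n : M) (x : X), act m (act n x) = act (m * n) x)
    (U : ℕ → Set X)
    (hU : ∀ i, MeasurableSet (U i))
    (hsep : ∀ x y : X, x ≠ y → ∃ i, (x ∈ U i ↔ y ∉ U i)) :
    let φ : X → (M → (ℕ → Bool)) := fun x s i => decide (act s x ∈ U i)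
    let shift : M → (M → (ℕ → Bool)) → (M → (ℕ → Bool)) := fun m f s => f (s * m)
    Measurable φ ∧
    Function.Injective φ ∧
    (∀ (t : M) (x : X), shift t (φ x) = φ (act t x)) ∧
    (∀ x y : X, (∃ m : M, x = act m y) ↔ ∃ m : M, φ x = shift m (φ y)) := by
  intro φ shift
  have hinj : Function.Injective φ := fun x y hxy =>
    injective_decide_mem_of_separates U hsep <| by simpa [φ, hone] using congrFun hxy 1
  have hequiv : ∀ (t : M) (x : X), shift t (φ x) = φ (act t x) := fun t x => by
    funext s i
    simp only [φ, shift, hmul]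
  exact ⟨measurable_decide_mem_act act hmeas U hU, hinj, hequiv,
    exists_eq_act_iff_of_injective_of_equivariant act shift hinj hequiv⟩
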